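/- arXiv:1511.09011 — 4 statements merged into one kernel-verified Lean document; each statement's English description precedes it below -/
import Mathlib

section
/- Let k ≥ 1, let u be a nonempty finite word and v an ω-word over the same alphabet A with alph(u) = alph(v) (the same set of letters occurring). Then for every ℓ ≥ 2^k, we have u^∞ ≲_{2,k} u^ℓ v. -/
namespace QAH

/-- Quantifier-free first-order formulas over letter predicates and `<`,
with variables as de Bruijn-style indices into a valuation. -/
inductive QF (A : Type) : Type
  | tru : QF A
  | letter : A → ℕ → QF A
  | lt : ℕ → ℕ → QF A
  | not : QF A → QF A
  | or : QF A → QF A → QF A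

/-- Prenex first-order formulas: a quantifier prefix over a quantifier-free matrix. -/
inductive Prenex (A : Type) : Type
  | qf : QF A → Prenex A
  | ex : Prenex A → Prenex A
  | all : Prenex A → Prenex A

variable {A : Type}

/-- Quantifier rank (for a prenex formula: the number of quantifiers). -/
def Prenex.rank : Prenex A → ℕ
  | .qf _ => 0
  | .ex φ => φ.rank + 1
  | .all φ => φ.rank + 1

def QF.ClosedUnder (n : ℕ) : QF A → Prop
  | .tru => True
  | .letter _ x => x < n
  | .lt x y => x < n ∧ y < n
  | .not φ => φ.ClosedUnder n
  | .or φ ψ => φ.ClosedUnder n ∧ ψ.ClosedUnder n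

def Prenex.ClosedUnder : ℕ → Prenex A → Prop
  | n, .qf φ => φ.ClosedUnder n
  | n, .ex φ => φ.ClosedUnder (n+1)
  | n, .all φ => φ.ClosedUnder (n+1)

/-- A sentence: no free variables. -/
def Prenex.Closed (φ : Prenex A) : Prop := φ.ClosedUnder 0

/-- `(φ.levels).1` is the least `i` such that `φ` is a `Σᵢ` formula (at most `i`
alternating quantifier blocks, starting with `∃`, or fewer blocks), and
`(φ.levels).2` the least `i` such that `φ` is a `Πᵢ` formula. -/
def Prenex.levels : Prenex A → ℕ × ℕ
  | .qf _ => (0, 0)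
  | .ex φ => (max (φ.levels).1 1, max (φ.levels).1 1 + 1)
  | .all φ => (max (φ.levels).2 1 + 1, max (φ.levels).2 1)

/-- `φ` is a `Σᵢ` formula. -/
def Prenex.IsSigma (i : ℕ) (φ : Prenex A) : Prop := (φ.levels).1 ≤ i

def consVal {D : Type} (d : D) (val : ℕ → D) : ℕ → D
  | 0 => d
  | n+1 => val n

def QF.Sat {D : Type} [LT D] (w : D → A) (val : ℕ → D) : QF A → Prop
  | .tru => True
  | .letter a x => w (val x) = a
  | .lt x y => val x < val y
  | .not φ => ¬ QF.Sat w val φ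
  | .or φ ψ => QF.Sat w val φ ∨ QF.Sat w val ψ

def Prenex.Sat {D : Type} [LT D] (w : D → A) : (ℕ → D) → Prenex A → Prop
  | val, .qf φ => φ.Sat w val
  | val, .ex φ => ∃ d : D, Prenex.Sat w (consVal d val) φ
  | val, .all φ => ∀ d : D, Prenex.Sat w (consVal d val) φ

/-- Satisfaction of a sentence by a finite word (positions `Fin u.length`). -/
def SatFin (u : List A) (φ : Prenex A) : Prop :=
  ∀ val : ℕ → Fin u.length, φ.Sat u.get val

/-- Satisfaction of a sentence by an ω-word (positions `ℕ`). -/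
def SatInf (w : ℕ → A) (φ : Prenex A) : Prop :=
  ∀ val : ℕ → ℕ, φ.Sat w val

/-- `u ≲_{i,k} v` on finite words: every `Σᵢ` sentence of quantifier rank at most `k`
satisfied by `u` is satisfied by `v`. -/
def leFin (i k : ℕ) (u v : List A) : Prop :=
  ∀ φ : Prenex A, φ.Closed → φ.IsSigma i → φ.rank ≤ k → SatFin u φ → SatFin v φ

/-- `u ≲_{i,k} v` on ω-words. -/
def leInf (i k : ℕ) (u v : ℕ → A) : Prop :=
  ∀ φ : Prenex A, φ.Closed → φ.IsSigma i → φ.rank ≤ k → SatInf u φ → SatInf v φ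

/-- `u ≡_{i,k} v` : mutual `≲_{i,k}`. -/
def equivFin (i k : ℕ) (u v : List A) : Prop := leFin i k u v ∧ leFin i k v u

def equivInf (i k : ℕ) (u v : ℕ → A) : Prop := leInf i k u v ∧ leInf i k v u

/-- Concatenation of a finite word to the left of an ω-word. -/
def catInf (u : List A) (v : ℕ → A) : ℕ → A :=
  fun n => if h : n < u.length then u.get ⟨n, h⟩ else v (n - u.length)

/-- The ω-word `u^∞ = uuu⋯`. -/
def wpow (u : List A) (hu : u ≠ []) : ℕ → A :=
  fun n => u.get ⟨n % u.length, Nat.mod_lt n (List.length_pos_iff.mpr hu)⟩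

/-- The finite word `u^ℓ`. -/
def fpow (u : List A) (ℓ : ℕ) : List A := (List.replicate ℓ u).flatten

/-- The alphabet (set of letters) of a finite word. -/
def alphFin (u : List A) : Set A := {a | a ∈ u}

/-- The alphabet of an ω-word. -/
def alphInf (w : ℕ → A) : Set A := {a | ∃ n, w n = a}

/-! If `w'` embeds into `w` by a strictly increasing, letter-preserving map, and the image contains
the positions chosen by the existential block of a Σ₂ sentence true in `w`, then the sentence is
true in `w'`: its universal part is a Π₁ property, which passes to subwords. So it suffices to embed
`u^ℓ v` into `u^∞` hitting any `k` prescribed positions. These lie in at most `k < 2^k ≤ ℓ` copies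
of `u`; map the `ℓ` copies of `u` in `u^ℓ` increasingly onto copies of `u` in `u^∞` that include
them, and send each letter of `v`, which occurs in `u`, into a later copy of its own. -/

def IsWordEmbedding {D D' : Type} [Preorder D] [Preorder D'] (R : D' → D) (w' : D' → A)
    (w : D → A) : Prop :=
  StrictMono R ∧ ∀ p, w (R p) = w' p

theorem consVal_agree {D D' : Type} {R : D' → D} {n : ℕ} {val : ℕ → D} {val' : ℕ → D'}
    (hval : ∀ i < n, R (val' i) = val i) (d' : D') :
    ∀ i < n + 1, R (consVal d' val' i) = consVal (R d') val i
  | 0, _ => rfl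
  | i + 1, hi => hval i (by omega)

section Transfer

variable {D D' : Type} [Preorder D] [LinearOrder D'] {w : D → A} {w' : D' → A} {R : D' → D}

theorem IsWordEmbedding.comp {D'' : Type} [LinearOrder D''] {w'' : D'' → A} {S : D'' → D'}
    (hR : IsWordEmbedding R w' w) (hS : IsWordEmbedding S w'' w') :
    IsWordEmbedding (R ∘ S) w'' w :=
  ⟨hR.1.comp hS.1, fun p => (hR.2 _).trans (hS.2 p)⟩

theorem QF.sat_iff_of_isWordEmbedding (hR : IsWordEmbedding R w' w) {n : ℕ} {val : ℕ → D}
    {val' : ℕ → D'} (hval : ∀ i < n, R (val' i) = val i) {ψ : QF A} (hψ : ψ.ClosedUnder n) :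
    ψ.Sat w val ↔ ψ.Sat w' val' := by
  induction ψ with
  | tru => rfl
  | letter a x => simp only [QF.Sat, ← hval x hψ, hR.2]
  | lt x y => simp only [QF.Sat, ← hval x hψ.1, ← hval y hψ.2, hR.1.lt_iff_lt]
  | not ψ ih => simp only [QF.Sat, ih hψ]
  | or ψ χ ih₁ ih₂ => simp only [QF.Sat, ih₁ hψ.1, ih₂ hψ.2]

theorem Prenex.sat_of_isWordEmbedding (hR : IsWordEmbedding R w' w) {φ : Prenex A}
    (hφ : (φ.levels).2 ≤ 1) {n : ℕ} (hc : φ.ClosedUnder n) {val : ℕ → D} {val' : ℕ → D'}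
    (hval : ∀ i < n, R (val' i) = val i) (h : φ.Sat w val) : φ.Sat w' val' := by
  induction φ generalizing n val val' with
  | qf ψ => exact (QF.sat_iff_of_isWordEmbedding hR hval hc).mp h
  | ex φ => simp only [Prenex.levels] at hφ; omega
  | all φ ih =>
    simp only [Prenex.levels] at hφ
    exact fun d' => ih (by omega) hc (consVal_agree hval d') (h (R d'))

/-- `W` lists the positions chosen by the existential block. -/
theorem Prenex.exists_witnesses_of_isSigma_two {φ : Prenex A} (hφ : φ.IsSigma 2) {n : ℕ}
    (hc : φ.ClosedUnder n) {val : ℕ → D} (h : φ.Sat w val) :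
    ∃ W : List D, W.length ≤ φ.rank ∧ ∀ R : D' → D, IsWordEmbedding R w' w →
      (∀ x ∈ W, x ∈ Set.range R) → ∀ val' : ℕ → D', (∀ i < n, R (val' i) = val i) →
        φ.Sat w' val' := by
  induction φ generalizing n val with
  | qf ψ =>
    exact ⟨[], Nat.zero_le _,
      fun R hR _ val' hval => (QF.sat_iff_of_isWordEmbedding hR hval hc).mp h⟩
  | all φ =>
    simp only [Prenex.IsSigma, Prenex.levels] at hφ
    refine ⟨[], Nat.zero_le _, fun R hR _ val' hval => ?_⟩
    exact Prenex.sat_of_isWordEmbedding hR (φ := .all φ) (by simp only [Prenex.levels]; omega)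
      hc hval h
  | ex φ ih =>
    simp only [Prenex.IsSigma, Prenex.levels] at hφ
    obtain ⟨x, hx⟩ := h
    obtain ⟨W, hWlen, hW⟩ := ih (by simp only [Prenex.IsSigma]; omega) hc hx
    refine ⟨x :: W, by simp only [List.length_cons, Prenex.rank]; omega,
      fun R hR hWR val' hval => ?_⟩
    obtain ⟨x', rfl⟩ := hWR x List.mem_cons_self
    exact ⟨x', hW R hR (fun y hy => hWR y (List.mem_cons_of_mem _ hy)) _ (consVal_agree hval x')⟩

end Transfer

theorem leInf_two_of_forall_exists_isWordEmbedding {w w' : ℕ → A} {k : ℕ}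
    (h : ∀ W : List ℕ, W.length ≤ k →
      ∃ R : ℕ → ℕ, IsWordEmbedding R w' w ∧ ∀ x ∈ W, x ∈ Set.range R) :
    leInf 2 k w w' := by
  intro φ hc hφ hk hsat val'
  obtain ⟨W, hWlen, hW⟩ :=
    Prenex.exists_witnesses_of_isSigma_two (w' := w') hφ hc (hsat fun _ => 0)
  obtain ⟨R, hR, hWR⟩ := h W (hWlen.trans hk)
  exact hW R hR hWR val' fun i hi => absurd hi (Nat.not_lt_zero i)

theorem exists_strictMono_of_card_le {C : Finset ℕ} {ℓ : ℕ} (hC : C.card ≤ ℓ) :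
    ∃ σ : ℕ → ℕ, StrictMono σ ∧ ∀ c ∈ C, ∃ i < ℓ, σ i = c := by
  classical
  set N := C.sup id + 1
  let S : ℕ → Prop := fun x => x ∈ C ∨ N ≤ x
  have hS : (Set.ofPred S).Infinite :=
    (Set.Ici_infinite N).mono fun x hx => Or.inr hx
  refine ⟨Nat.nth S, Nat.nth_strictMono hS,
    fun c hc => ⟨Nat.count S c, ?_, Nat.nth_count (Or.inl hc)⟩⟩
  have hbelow : (Finset.range c).filter S ⊆ C.erase c := by
    intro x hx
    simp only [Finset.mem_filter, Finset.mem_range] at hx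
    have hcN : c < N := Nat.lt_succ_of_le (C.le_sup (f := id) hc)
    exact Finset.mem_erase.mpr ⟨hx.1.ne, hx.2.resolve_right (by omega)⟩
  calc Nat.count S c = (Finset.range c |>.filter S).card := Nat.count_eq_card_filter_range S c
    _ ≤ (C.erase c).card := Finset.card_le_card hbelow
    _ < C.card := Finset.card_erase_lt_of_mem hc
    _ ≤ ℓ := hC

theorem mul_add_lt_mul_add {a b r r' L : ℕ} (hr : r < L) (h : a < b ∨ a = b ∧ r < r') :
    a * L + r < b * L + r' := by
  rcases h with h | ⟨rfl, h⟩
  · calc a * L + r < (a + 1) * L := by rw [Nat.succ_mul]; omega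
      _ ≤ b * L := Nat.mul_le_mul_right L h
      _ ≤ b * L + r' := Nat.le_add_right _ _
  · omega

section Words

variable (u : List A) (hu : u ≠ [])

theorem wpow_mul_add (q : ℕ) {r : ℕ} (hr : r < u.length) :
    wpow u hu (q * u.length + r) = u[r] := by
  simp only [wpow, List.get_eq_getElem, Nat.mul_add_mod_of_lt hr]

theorem isWordEmbedding_wpow_reindex {σ : ℕ → ℕ} (hσ : StrictMono σ) :
    IsWordEmbedding (fun p => σ (p / u.length) * u.length + p % u.length)
      (wpow u hu) (wpow u hu) := by
  have hL : 0 < u.length := List.length_pos_iff.mpr hu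
  refine ⟨fun p p' hp => mul_add_lt_mul_add (Nat.mod_lt p hL) ?_, fun p => ?_⟩
  · rcases (Nat.div_le_div_right (c := u.length) hp.le).lt_or_eq with h | h
    · exact Or.inl (hσ h)
    · have := Nat.div_add_mod p u.length
      have := Nat.div_add_mod p' u.length
      exact Or.inr ⟨by rw [h], by rw [h] at *; omega⟩
  · exact wpow_mul_add u hu _ (Nat.mod_lt p hL)

theorem length_fpow (ℓ : ℕ) : (fpow u ℓ).length = ℓ * u.length := by
  simp [fpow]

theorem getElem_fpow {ℓ p : ℕ} (hp : p < (fpow u ℓ).length) :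
    (fpow u ℓ)[p] = u[p % u.length]'(Nat.mod_lt p (List.length_pos_iff.mpr hu)) := by
  induction ℓ generalizing p with
  | zero => simp [length_fpow] at hp
  | succ ℓ ih =>
    have hsucc : fpow u (ℓ + 1) = u ++ fpow u ℓ := by simp [fpow, List.replicate_succ]
    simp only [hsucc]
    rcases Nat.lt_or_ge p u.length with hpu | hpu
    · rw [List.getElem_append_left hpu]
      simp only [Nat.mod_eq_of_lt hpu]
    · rw [List.getElem_append_right hpu, ih]
      congr 1
      conv_rhs => rw [← Nat.sub_add_cancel hpu, Nat.add_mod_right]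

theorem catInf_fpow_of_lt (v : ℕ → A) {ℓ p : ℕ} (hp : p < ℓ * u.length) :
    catInf (fpow u ℓ) v p = wpow u hu p := by
  have hp' : p < (fpow u ℓ).length := by rwa [length_fpow]
  simp only [catInf, dif_pos hp', List.get_eq_getElem, getElem_fpow u hu, wpow]

theorem catInf_fpow_of_le (v : ℕ → A) {ℓ p : ℕ} (hp : ℓ * u.length ≤ p) :
    catInf (fpow u ℓ) v p = v (p - ℓ * u.length) := by
  have hp' : ¬p < (fpow u ℓ).length := by rw [length_fpow]; omega
  rw [catInf, dif_neg hp', length_fpow]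

theorem exists_isWordEmbedding_catInf_fpow {v : ℕ → A} (hv : ∀ j, v j ∈ u) (ℓ : ℕ) :
    ∃ R : ℕ → ℕ, IsWordEmbedding R (catInf (fpow u ℓ) v) (wpow u hu) ∧
      ∀ p < ℓ * u.length, R p = p := by
  choose ρ hρL hρ using fun j => List.getElem_of_mem (hv j)
  refine ⟨fun p => if p < ℓ * u.length then p
      else (ℓ + (p - ℓ * u.length)) * u.length + ρ (p - ℓ * u.length),
    ⟨strictMono_nat_of_lt_succ fun p => ?_, fun p => ?_⟩, fun p hp => if_pos hp⟩
  · by_cases hp : p + 1 < ℓ * u.length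
    · rw [if_pos hp, if_pos (by omega)]
      exact p.lt_succ_self
    by_cases hp' : p < ℓ * u.length
    · rw [if_pos hp', if_neg hp]
      have := Nat.mul_le_mul_right u.length (Nat.le_add_right ℓ (p + 1 - ℓ * u.length))
      omega
    · rw [if_neg hp', if_neg hp]
      exact mul_add_lt_mul_add (hρL _) (Or.inl (by omega))
  · dsimp only
    by_cases hp : p < ℓ * u.length
    · rw [if_pos hp, catInf_fpow_of_lt u hu v hp]
    · rw [if_neg hp, catInf_fpow_of_le u v (by omega), wpow_mul_add u hu _ (hρL _), hρ]

theorem exists_isWordEmbedding_catInf_fpow_covering {v : ℕ → A} (hv : ∀ j, v j ∈ u) {ℓ : ℕ}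
    (W : List ℕ) (hW : W.length ≤ ℓ) :
    ∃ R : ℕ → ℕ, IsWordEmbedding R (catInf (fpow u ℓ) v) (wpow u hu) ∧
      ∀ x ∈ W, x ∈ Set.range R := by
  set L := u.length
  have hL : 0 < L := List.length_pos_iff.mpr hu
  obtain ⟨σ, hσ, hσW⟩ := exists_strictMono_of_card_le (C := (W.map (· / L)).toFinset)
    ((List.toFinset_card_le _).trans (by simpa using hW))
  obtain ⟨R, hR, hRid⟩ := exists_isWordEmbedding_catInf_fpow u hu hv ℓ
  refine ⟨_, (isWordEmbedding_wpow_reindex u hu hσ).comp hR, fun x hx => ?_⟩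
  obtain ⟨i, hi, hσi⟩ := hσW (x / L) (List.mem_toFinset.mpr (List.mem_map_of_mem hx))
  have hdiv : (i * L + x % L) / L = i := by
    rw [Nat.add_comm, Nat.add_mul_div_right _ _ hL, Nat.div_eq_of_lt (Nat.mod_lt _ hL), zero_add]
  have hlt : i * L + x % L < ℓ * L := by
    simpa using mul_add_lt_mul_add (r' := 0) (Nat.mod_lt x hL) (Or.inl hi)
  refine ⟨i * L + x % L, ?_⟩
  show σ (R (i * L + x % L) / L) * L + R (i * L + x % L) % L = x
  rw [hRid _ hlt, hdiv, hσi, Nat.mul_add_mod_of_lt (Nat.mod_lt x hL), Nat.div_add_mod']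

end Words

theorem upow_le_upow_cat_general (A : Type) (k : ℕ)
    (u : List A) (hu : u ≠ []) (v : ℕ → A) (halph : alphFin u = alphInf v)
    (ℓ : ℕ) (hℓ : 2 ^ k ≤ ℓ) :
    leInf 2 k (wpow u hu) (catInf (fpow u ℓ) v) := by
  have hv : ∀ j, v j ∈ u := fun j => show v j ∈ alphFin u from halph ▸ ⟨j, rfl⟩
  refine leInf_two_of_forall_exists_isWordEmbedding fun W hW => ?_
  exact exists_isWordEmbedding_catInf_fpow_covering u hu hv W
    (hW.trans (Nat.lt_two_pow_self.le.trans hℓ))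

/-- Let `k ≥ 1`, `u` a nonempty finite word and `v` an ω-word with
`alph u = alph v`. Then for every `ℓ ≥ 2^k`, `u^∞ ≲_{2,k} u^ℓ v`. -/
theorem upow_le_upow_cat (A : Type) (k : ℕ) (hk : 1 ≤ k)
    (u : List A) (hu : u ≠ []) (v : ℕ → A) (halph : alphFin u = alphInf v)
    (ℓ : ℕ) (hℓ : 2 ^ k ≤ ℓ) :
    leInf 2 k (wpow u hu) (catInf (fpow u ℓ) v) :=
  upow_le_upow_cat_general A k u hu v halph ℓ hℓ

end QAH
end

section
/- Let γ: A^+ → S be a semigroup morphism from the free semigroup on a finite alphabet A into a finite semigroup S. Then every ω-word w ∈ A^∞ admits a factorization w = u₀u₁u₂⋯ into infinitely many nonempty finite words such that γ(u_j) = e for all j ≥ 1, where e ∈ S is some idempotent. -/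
/-!
Colour a pair `a < b` of positions by `γ w[a..b)`. By the infinite Ramsey theorem some infinite
set of positions `c₀ < c₁ < ⋯` is monochromatic, of colour `e` say. The colour `e` is
idempotent because `w[c₀..c₂) = w[c₀..c₁) w[c₁..c₂)` has colour `e` as well, and dropping `c₀`
makes the first cut positive.
-/

namespace QAH

def seg {A : Type} (w : ℕ → A) (a b : ℕ) : List A :=
  (List.range (b - a)).map fun t => w (a + t)

theorem Ultrafilter.exists_eventually_eq {α S : Type*} [Finite S] (U : Ultrafilter α)
    (f : α → S) : ∃ s, ∀ᶠ x in U, f x = s :=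
  U.eventually_exists_iff.mp (.of_forall fun x => ⟨f x, rfl⟩)

theorem Nat.exists_strictMono_monochromatic {S : Type*} [Finite S] (col : ℕ → ℕ → S) :
    ∃ (e : S) (c : ℕ → ℕ), StrictMono c ∧ ∀ i j, i < j → col (c i) (c j) = e := by
  let U := Filter.hyperfilter ℕ
  -- `limCol a` is the colour of `(a, b)` for `U`-almost every `b`.
  choose limCol hlimCol using fun a => Ultrafilter.exists_eventually_eq U (col a)
  obtain ⟨e, he⟩ := Ultrafilter.exists_eventually_eq U limCol
  obtain ⟨c, -, hc⟩ := exists_seq_of_forall_finset_exists (limCol · = e)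
    (fun a b => a < b ∧ col a b = e) fun s hs => by
      have hgood : ∀ᶠ b in U, limCol b = e ∧ ∀ a ∈ s, a < b ∧ col a b = e := by
        refine he.and ((s.eventually_all).mpr fun a ha => ?_)
        refine ((Filter.eventually_gt_atTop a).filter_mono Nat.hyperfilter_le_atTop).and ?_
        simpa [hs a ha] using hlimCol a
      exact hgood.exists
  exact ⟨e, c, strictMono_nat_of_lt_succ fun n => (hc n (n + 1) n.lt_succ_self).1,
    fun i j hij => (hc i j hij).2⟩

section seg

variable {A : Type} (w : ℕ → A)

theorem seg_ne_nil {a b : ℕ} (h : a < b) : seg w a b ≠ [] := by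
  simpa [seg, Nat.sub_eq_zero_iff_le] using h

theorem seg_append {a b c : ℕ} (hab : a ≤ b) (hbc : b ≤ c) :
    seg w a b ++ seg w b c = seg w a c := by
  obtain ⟨k, rfl⟩ := Nat.exists_eq_add_of_le hab
  obtain ⟨l, rfl⟩ := Nat.exists_eq_add_of_le hbc
  simp only [seg, Nat.add_sub_add_left, Nat.add_sub_cancel_left, Nat.add_assoc, List.range_add,
    List.map_append, List.map_map]
  rfl

theorem map_seg_mul_map_seg {S : Type*} [Mul S] {γ : List A → S}
    (hγ : ∀ u v : List A, u ≠ [] → v ≠ [] → γ (u ++ v) = γ u * γ v) {a b c : ℕ}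
    (hab : a < b) (hbc : b < c) : γ (seg w a b) * γ (seg w b c) = γ (seg w a c) := by
  rw [← hγ _ _ (seg_ne_nil w hab) (seg_ne_nil w hbc), seg_append w hab.le hbc.le]

end seg

/-- **Ramsey factorization.** For a semigroup morphism `γ : A⁺ → S` into a
finite semigroup and any ω-word `w`, there is an idempotent `e ∈ S` and a factorization
`w = u₀u₁u₂⋯` into nonempty finite words with `γ(u_j) = e` for all `j ≥ 1`. -/
theorem ramsey_factorization (A S : Type) [Semigroup S] [Finite S]
    (γ : List A → S)
    (hγ : ∀ u v : List A, u ≠ [] → v ≠ [] → γ (u ++ v) = γ u * γ v)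
    (w : ℕ → A) :
    ∃ (e : S) (c : ℕ → ℕ), e * e = e ∧ StrictMono c ∧ 1 ≤ c 0 ∧
      ∀ j : ℕ, γ (seg w (c j) (c (j+1))) = e := by
  obtain ⟨e, c, hc, hcol⟩ := Nat.exists_strictMono_monochromatic fun a b => γ (seg w a b)
  have hidem : e * e = e :=
    calc e * e = γ (seg w (c 0) (c 1)) * γ (seg w (c 1) (c 2)) := by
          rw [hcol 0 1 one_pos, hcol 1 2 one_lt_two]
      _ = γ (seg w (c 0) (c 2)) := map_seg_mul_map_seg w hγ (hc one_pos) (hc one_lt_two)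
      _ = e := hcol 0 2 two_pos
  exact ⟨e, fun j => c (j + 1), hidem, hc.comp (strictMono_id.add_const 1),
    (Nat.zero_le _).trans_lt (hc Nat.zero_lt_one),
    fun j => hcol (j + 1) (j + 2) (Nat.lt_succ_self _)⟩

end QAH
end

section
/- Any subset of S^+ (finite words over a finite alphabet S) that is closed under taking subwords is a regular language. -/
/-!
The words outside a subword-closed language `L ⊆ S⁺`, together with `[]`, form an upward-closed set
for the subword order; by Higman's lemma it is the upward closure of its finitely many minimal
words, hence a finite union of languages `{x | w <+ x}`. Each of these is regular by Myhill–Nerode: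
its left quotient by `u` is `{x | r <+ x}`, where `r` is the suffix of `w` left over after greedily
embedding `w` into `u`, and `w` has finitely many suffixes.
-/

namespace QAH

open List Language

variable {α : Type*}

section Residual

variable [DecidableEq α]

def sublistResidual : List α → List α → List α
  | [], _ => []
  | w, [] => w
  | a :: w, b :: u => if a = b then sublistResidual w u else sublistResidual (a :: w) u

theorem sublistResidual_suffix : ∀ w u : List α, sublistResidual w u <:+ w
  | [], _ => by simp [sublistResidual]
  | a :: w, [] => by simp [sublistResidual]
  | a :: w, b :: u => by
    unfold sublistResidual
    split_ifs
    · exact (sublistResidual_suffix w u).trans (suffix_cons a w)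
    · exact sublistResidual_suffix (a :: w) u

theorem sublist_append_iff_sublistResidual :
    ∀ w u x : List α, w <+ u ++ x ↔ sublistResidual w u <+ x
  | [], _, x => by simp [sublistResidual]
  | a :: w, [], x => by simp [sublistResidual]
  | a :: w, b :: u, x => by
    unfold sublistResidual
    split_ifs with hab
    · subst hab
      rw [cons_append, cons_sublist_cons, sublist_append_iff_sublistResidual w u x]
    · rw [cons_append, sublist_cons_iff, ← sublist_append_iff_sublistResidual (a :: w) u x]
      simp [hab]

end Residual

def sublistUpperClosure (w : List α) : Language α :=
  {x | w <+ x}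

theorem mem_sublistUpperClosure {w x : List α} : x ∈ sublistUpperClosure w ↔ w <+ x :=
  Iff.rfl

theorem isRegular_sublistUpperClosure (w : List α) : (sublistUpperClosure w).IsRegular := by
  classical
  refine .of_finite_range_leftQuotient <|
    ((finite_toSet w.tails).image sublistUpperClosure).subset ?_
  rintro _ ⟨u, rfl⟩
  refine ⟨sublistResidual w u, (mem_tails _ _).2 (sublistResidual_suffix w u), ?_⟩
  ext x
  exact (sublist_append_iff_sublistResidual w u x).symm

theorem isRegular_zero : (0 : Language α).IsRegular :=
  .of_finite_range_leftQuotient <| (Set.finite_singleton 0).subset <| by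
    rintro _ ⟨u, rfl⟩
    exact Set.eq_empty_of_forall_notMem fun x hx => notMem_zero _ hx

theorem isRegular_biSup {ι : Type*} {s : Set ι} (hs : s.Finite) {L : ι → Language α}
    (hL : ∀ i ∈ s, (L i).IsRegular) : (⨆ i ∈ s, L i).IsRegular := by
  induction s, hs using Set.Finite.induction_on with
  | empty =>
    simp only [Set.mem_empty_iff_false, iSup_false, iSup_bot]
    exact isRegular_zero
  | @insert a s _ _ ih =>
    rw [iSup_insert]
    exact (hL a (Set.mem_insert a s)).add (ih fun i hi => hL i (Set.mem_insert_of_mem a hi))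

theorem wellQuasiOrdered_sublist [Finite α] :
    WellQuasiOrdered ((· <+ ·) : List α → List α → Prop) := by
  have higman := (Set.finite_univ (α := α)).partiallyWellOrderedOn (r := (· = ·))
    |>.partiallyWellOrderedOn_sublistForall₂ (· = ·)
  simp only [Set.mem_univ, imp_true_iff, Set.ofPred_true,
    Set.partiallyWellOrderedOn_univ_iff] at higman
  refine fun f => (higman f).imp fun m => Exists.imp fun n => And.imp_right fun h => ?_
  obtain ⟨l, hl, hsub⟩ := sublistForall₂_iff.1 h
  rw [forall₂_eq_eq_eq] at hl
  exact hl ▸ hsub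

def sublistMinimals (U : Set (List α)) : Set (List α) :=
  {m | m ∈ U ∧ ∀ v ∈ U, v <+ m → v = m}

theorem finite_sublistMinimals [Finite α] (U : Set (List α)) : (sublistMinimals U).Finite :=
  IsAntichain.finite_of_wellQuasiOrdered (fun _ ha _ hb hne hab => hne (hb.2 _ ha.1 hab))
    wellQuasiOrdered_sublist

theorem exists_mem_sublistMinimals_sublist {U : Set (List α)} {u : List α} (hu : u ∈ U) :
    ∃ m ∈ sublistMinimals U, m <+ u := by
  obtain ⟨m, ⟨hmU, hmu⟩, hshortest⟩ :=
    (measure length).wf.has_min {v | v ∈ U ∧ v <+ u} ⟨u, hu, .refl u⟩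
  exact ⟨m, ⟨hmU, fun v hv hvm =>
    hvm.eq_of_length_le (not_lt.1 (hshortest v ⟨hv, hvm.trans hmu⟩))⟩, hmu⟩

theorem isRegular_of_sublist_upwardClosed [Finite α] {L : Language α}
    (hL : ∀ u v, u <+ v → u ∈ L → v ∈ L) : L.IsRegular := by
  have hbasis : L = ⨆ m ∈ sublistMinimals L, sublistUpperClosure m := by
    ext x
    simp only [mem_iSup, mem_sublistUpperClosure, exists_prop]
    constructor
    · exact exists_mem_sublistMinimals_sublist
    · rintro ⟨m, hm, hmx⟩
      exact hL m x hmx hm.1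
  rw [hbasis]
  exact isRegular_biSup (finite_sublistMinimals L) fun m _ => isRegular_sublistUpperClosure m

theorem isRegular_of_sublist_downwardClosed [Finite α] {L : Language α}
    (hL : ∀ u v, u <+ v → v ∈ L → u ∈ L) : L.IsRegular :=
  .of_compl <| isRegular_of_sublist_upwardClosed fun u v huv hu hv => hu (hL u v huv hv)

/-- Any subset of `S⁺` (nonempty finite words over a finite
alphabet `S`) that is closed under taking (scattered) subwords is a regular language. -/
theorem subword_closed_is_regular (S : Type) [Finite S] (L : Language S)
    (hne : ∀ u ∈ L, u ≠ ([] : List S))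
    (hclosed : ∀ u v : List S, List.Sublist u v → v ∈ L → u ≠ [] → u ∈ L) :
    L.IsRegular := by
  have hL_add_one : (L + 1).IsRegular := by
    refine isRegular_of_sublist_downwardClosed fun u v huv hv => ?_
    simp only [mem_add, mem_one] at hv ⊢
    rcases hv with hv | rfl
    · by_cases hu : u = []
      exacts [.inr hu, .inl (hclosed u v huv hv hu)]
    · exact .inr (sublist_nil.1 huv)
  have hone : (1 : Language S).IsRegular :=
    isRegular_of_sublist_downwardClosed fun u v huv hv => sublist_nil.1 ((mem_one v).1 hv ▸ huv)
  have hL : L = (L + 1) ⊓ 1ᶜ := by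
    ext x
    simp only [mem_inf, mem_add, mem_one]
    constructor
    · exact fun hx => ⟨.inl hx, hne x hx⟩
    · rintro ⟨hx | hx, hnil⟩
      exacts [hx, absurd hx hnil]
  rw [hL]
  exact hL_add_one.inf hone.compl

end QAH
end

section
/- Let α: (A^+, A^∞) → (S_+, S_∞) be an alphabet-compatible morphism into a finite ω-semigroup and define the edge relation: (s_+, s_∞) →_B (t_+, t_∞) iff there exist (p₁,p₂), (q₁,q₂) ∈ C₂[α_+] and q ∈ α(A^+) with alph(p₁) = alph(q₁) = alph(q) = B, s_+ p₁ (q₁)^∞ = s_∞ and s_+ p₂ (q₂)^ω q = t_+. Then for every B ⊆ A, the relation →_B is transitive. -/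
namespace QAH

variable {A : Type}

/-! ### Definability and separation -/

/-- `K` is defined (within `A^+`) by a closed `Σᵢ` sentence. -/
def SigmaDefFin (i : ℕ) (K : Set (List A)) : Prop :=
  ∃ φ : Prenex A, φ.Closed ∧ φ.IsSigma i ∧ K = {u | u ≠ [] ∧ SatFin u φ}

/-- `K` is defined by a closed `Σᵢ` sentence (ω-words). -/
def SigmaDefInf (i : ℕ) (K : Set (ℕ → A)) : Prop :=
  ∃ φ : Prenex A, φ.Closed ∧ φ.IsSigma i ∧ K = {w | SatInf w φ}

/-- `K` separates `L₁` from `L₂`. -/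
def Separates {X : Type} (K L₁ L₂ : Set X) : Prop := L₁ ⊆ K ∧ K ∩ L₂ = ∅

/-- Boolean combinations (relative to the universe `U`) of sets satisfying `G`. -/
inductive BoolComb {X : Type} (U : Set X) (G : Set X → Prop) : Set X → Prop
  | base (K : Set X) (h : G K) : BoolComb U G K
  | compl (K : Set X) (h : BoolComb U G K) : BoolComb U G (U \ K)
  | union (K K' : Set X) (h : BoolComb U G K) (h' : BoolComb U G K') : BoolComb U G (K ∪ K')

/-- `K ⊆ A^+` is `BΣᵢ`-definable: a Boolean combination of `Σᵢ`-definable languages. -/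
def BSigmaDefFin (i : ℕ) (K : Set (List A)) : Prop :=
  BoolComb {u : List A | u ≠ []} (SigmaDefFin i) K

def BSigmaDefInf (i : ℕ) (K : Set (ℕ → A)) : Prop :=
  BoolComb Set.univ (SigmaDefInf i) K

/-! ### Semigroups and ω-semigroups -/

/-- `mpow mul s n` is `s^(n+1)`: the `(n+1)`-fold product of `s`. -/
def mpow {S : Type} (mul : S → S → S) (s : S) : ℕ → S
  | 0 => s
  | n+1 => mul (mpow mul s n) s

/-- `segProd mul f a n` is the product `f a * f (a+1) * ⋯ * f (a+n)`. -/
def segProd {S : Type} (mul : S → S → S) (f : ℕ → S) (a : ℕ) : ℕ → S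
  | 0 => f a
  | n+1 => mul (segProd mul f a n) (f (a + n + 1))

/-- An ω-semigroup `(S₊, S_∞)`: a semigroup `S₊`, a mixed product and an infinite
product, satisfying all forms of associativity. -/
structure OmegaSG (Sp Si : Type) where
  mul : Sp → Sp → Sp
  act : Sp → Si → Si
  iprod : (ℕ → Sp) → Si
  mul_assoc : ∀ a b c, mul (mul a b) c = mul a (mul b c)
  act_assoc : ∀ a b x, act (mul a b) x = act a (act b x)
  act_iprod : ∀ f : ℕ → Sp, act (f 0) (iprod fun n => f (n+1)) = iprod f
  iprod_group : ∀ (f : ℕ → Sp) (c : ℕ → ℕ), StrictMono c → c 0 = 0 →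
    iprod (fun n => segProd mul f (c n) (c (n+1) - c n - 1)) = iprod f

/-- `s^∞`: the infinite product `sss⋯`. -/
def OmegaSG.ipow {Sp Si : Type} (M : OmegaSG Sp Si) (s : Sp) : Si := M.iprod fun _ => s

/-- The set `C_{2,2}[α₊]` of `Σ₂`-chains of length 2 for `α₊ : A⁺ → S₊`. -/
def C22Fin {Sp : Type} (αp : List A → Sp) : Set (Sp × Sp) :=
  {p | ∀ k, 1 ≤ k → ∃ x y : List A, x ≠ [] ∧ y ≠ [] ∧
      αp x = p.1 ∧ αp y = p.2 ∧ leFin 2 k x y}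

/-- The set `C_{2,2}[α_∞]` of `Σ₂`-chains of length 2 for `α_∞ : A^∞ → S_∞`. -/
def C22Inf {Si : Type} (αi : (ℕ → A) → Si) : Set (Si × Si) :=
  {p | ∀ k, 1 ≤ k → ∃ w₁ w₂ : ℕ → A,
      αi w₁ = p.1 ∧ αi w₂ = p.2 ∧ leInf 2 k w₁ w₂}

/-- The alphabet of `s ∈ S₊` (well defined when `α` is alphabet compatible). -/
def alphS {Sp : Type} (αp : List A → Sp) (s : Sp) : Set A :=
  {a | ∃ u : List A, u ≠ [] ∧ αp u = s ∧ a ∈ u}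

/-- The alphabet of `t ∈ S_∞`. -/
def alphSi {Si : Type} (αi : (ℕ → A) → Si) (t : Si) : Set A :=
  {a | ∃ w : ℕ → A, αi w = t ∧ ∃ n, w n = a}

/-- Multiplication on `S₊¹ = S₊ ∪ {1}` by an element of `S₊` (`none` is the neutral element). -/
def mul1 {Sp Si : Type} (M : OmegaSG Sp Si) : Option Sp → Sp → Sp
  | none, s => s
  | some t, s => M.mul t s

/-- The `B`-labeled edge relation of the graph `G[α]` associated to `α`:
`(s₊, s_∞) →_B (t₊, t_∞)` iff there are `(p₁,p₂), (q₁,q₂) ∈ C₂[α₊]` and `q ∈ α(A⁺)`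
with `alph p₁ = alph q₁ = alph q = B`, `s₊ p₁ (q₁)^∞ = s_∞` and `s₊ p₂ (q₂)^ω q = t₊`.
Here `e` is such that `x ↦ mpow M.mul x e = x^(e+1) = x^ω` is the idempotent power. -/
def Edge {Sp Si : Type} (M : OmegaSG Sp Si) (αp : List A → Sp) (e : ℕ) (B : Set A)
    (n m : Option Sp × Si) : Prop :=
  ∃ p₁ p₂ q₁ q₂ qq : Sp,
    (p₁, p₂) ∈ C22Fin αp ∧ (q₁, q₂) ∈ C22Fin αp ∧ (∃ u : List A, u ≠ [] ∧ αp u = qq) ∧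
    alphS αp p₁ = B ∧ alphS αp q₁ = B ∧ alphS αp qq = B ∧
    M.act (mul1 M n.1 p₁) (M.ipow q₁) = n.2 ∧
    m.1 = some (M.mul (mul1 M n.1 p₂) (M.mul (mpow M.mul q₂ e) qq))

/-!
Given `s →_B t →_B r`, keep the witnesses `(p₁,p₂)`, `(q₁,q₂)` of the first edge and
replace `q` by `q p₂' (q₂')^ω q'`: by associativity
`r₊ = s₊ p₂' (q₂')^ω q' = s₊ p₂ q₂^ω (q p₂' (q₂')^ω q')`.
The new factor still has alphabet `B` because alphabets are preserved along `Σ₂`-chains: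
the presence and the absence of a letter are both expressed by `Σ₂` sentences of rank 1.
-/

def alphImage {Sp : Type} (αp : List A → Sp) (B : Set A) : Set Sp :=
  {s | ∃ u : List A, u ≠ [] ∧ αp u = s ∧ alphFin u = B}

def AlphCompatible {Sp : Type} (αp : List A → Sp) : Prop :=
  ∀ u v : List A, u ≠ [] → v ≠ [] → αp u = αp v → alphFin u = alphFin v

lemma alphFin_append (u v : List A) : alphFin (u ++ v) = alphFin u ∪ alphFin v := by
  ext a; simp [alphFin]

lemma alphFin_eq_of_leFin {i k : ℕ} (hi : 2 ≤ i) (hk : 1 ≤ k) {x y : List A} (hy : y ≠ [])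
    (h : leFin i k x y) : alphFin x = alphFin y := by
  have pos : Fin y.length := ⟨0, List.length_pos_iff.mpr hy⟩
  ext a
  constructor
  · intro ha
    have hsat : SatFin y (.ex (.qf (.letter a 0))) :=
      h _ Nat.zero_lt_one (by simp [Prenex.IsSigma, Prenex.levels]; omega) hk
        fun _ => (List.mem_iff_get.mp ha).imp fun _ hd => hd
    obtain ⟨d, hd⟩ := hsat fun _ => pos
    exact hd ▸ List.get_mem y d
  · intro ha
    by_contra hax
    have hsat : SatFin y (.all (.qf (.not (.letter a 0)))) :=
      h _ Nat.zero_lt_one (by simp [Prenex.IsSigma, Prenex.levels]; omega) hk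
        fun _ d hd => hax (hd ▸ List.get_mem x d)
    obtain ⟨d, hd⟩ := List.mem_iff_get.mp ha
    exact hsat (fun _ => pos) d hd

section alphImage

variable {Sp : Type} {αp : List A → Sp} {B : Set A}

lemma mem_alphImage_iff (hα : AlphCompatible αp) {s : Sp} :
    s ∈ alphImage αp B ↔ (∃ u : List A, u ≠ [] ∧ αp u = s) ∧ alphS αp s = B := by
  have alphS_eq {u : List A} (hu : u ≠ []) : alphS αp (αp u) = alphFin u := by
    ext a
    exact ⟨fun ⟨v, hv, hvu, hav⟩ => hα v u hv hu hvu ▸ hav, fun ha => ⟨u, hu, rfl, ha⟩⟩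
  constructor
  · rintro ⟨u, hu, rfl, rfl⟩
    exact ⟨⟨u, hu, rfl⟩, alphS_eq hu⟩
  · rintro ⟨⟨u, hu, rfl⟩, rfl⟩
    exact ⟨u, hu, rfl, (alphS_eq hu).symm⟩

lemma snd_mem_alphImage_of_mem_C22Fin (hα : AlphCompatible αp) {p : Sp × Sp}
    (hp : p ∈ C22Fin αp) (hB : alphS αp p.1 = B) : p.2 ∈ alphImage αp B := by
  obtain ⟨x, y, hx, hy, hxp, hyp, hxy⟩ := hp 1 le_rfl
  refine ⟨y, hy, hyp, ?_⟩
  rw [← alphFin_eq_of_leFin le_rfl le_rfl hy hxy, ← hB, ← hxp]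
  exact (((mem_alphImage_iff hα).1 ⟨x, hx, rfl, rfl⟩).2).symm

variable {mul : Sp → Sp → Sp}
  (hmul : ∀ u v : List A, u ≠ [] → v ≠ [] → αp (u ++ v) = mul (αp u) (αp v))
include hmul

lemma mul_mem_alphImage {s t : Sp} (hs : s ∈ alphImage αp B) (ht : t ∈ alphImage αp B) :
    mul s t ∈ alphImage αp B := by
  obtain ⟨u, hu, rfl, rfl⟩ := hs
  obtain ⟨v, hv, rfl, hvu⟩ := ht
  refine ⟨u ++ v, by simp [hu], hmul u v hu hv, ?_⟩
  rw [alphFin_append, hvu, Set.union_self]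

lemma mpow_mem_alphImage {s : Sp} (hs : s ∈ alphImage αp B) :
    ∀ n, mpow mul s n ∈ alphImage αp B
  | 0 => hs
  | n + 1 => mul_mem_alphImage hmul (mpow_mem_alphImage hs n) hs

end alphImage

theorem edge_transitive_general (A Sp Si : Type) (M : OmegaSG Sp Si)
    (αp : List A → Sp)
    (hp : ∀ u v : List A, u ≠ [] → v ≠ [] → αp (u ++ v) = M.mul (αp u) (αp v))
    (hacF : ∀ u v : List A, u ≠ [] → v ≠ [] → αp u = αp v → alphFin u = alphFin v)
    (e : ℕ) :
    ∀ B : Set A, Transitive (Edge M αp e B) := by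
  intro B n m l ⟨p₁, p₂, q₁, q₂, q, hP, hQ, hq, hp₁, hq₁, hqB, hact, hm⟩
    ⟨p₁', p₂', q₁', q₂', q', hP', hQ', hq', hp₁', hq₁', hqB', _, hl⟩
  have mem {s : Sp} (hs : ∃ u : List A, u ≠ [] ∧ αp u = s) (hB : alphS αp s = B) :
      s ∈ alphImage αp B := (mem_alphImage_iff hacF).2 ⟨hs, hB⟩
  have hnew : M.mul q (M.mul p₂' (M.mul (mpow M.mul q₂' e) q')) ∈ alphImage αp B :=
    mul_mem_alphImage hp (mem hq hqB) <|
      mul_mem_alphImage hp (snd_mem_alphImage_of_mem_C22Fin hacF hP' hp₁') <|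
        mul_mem_alphImage hp
          (mpow_mem_alphImage hp (snd_mem_alphImage_of_mem_C22Fin hacF hQ' hq₁') e)
          (mem hq' hqB')
  obtain ⟨hnew_word, hnew_alph⟩ := (mem_alphImage_iff hacF).1 hnew
  refine ⟨p₁, p₂, q₁, q₂, _, hP, hQ, hnew_word, hp₁, hq₁, hnew_alph, hact, ?_⟩
  rw [hl, hm]
  simp only [mul1, M.mul_assoc]

/-- For an alphabet-compatible morphism `α` into a finite
ω-semigroup and every `B ⊆ A`, the `B`-labeled edge relation of the graph `G[α]`
is transitive. (Here `x^ω = mpow M.mul x e` is the idempotent power.) -/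
theorem edge_transitive (A Sp Si : Type) (M : OmegaSG Sp Si)
    (hSp : Finite Sp) (hSi : Finite Si)
    (αp : List A → Sp) (αi : (ℕ → A) → Si)
    (hp : ∀ u v : List A, u ≠ [] → v ≠ [] → αp (u ++ v) = M.mul (αp u) (αp v))
    (hmix : ∀ (u : List A), u ≠ [] → ∀ w : ℕ → A, αi (catInf u w) = M.act (αp u) (αi w))
    (hpow : ∀ (u : List A) (hu : u ≠ []), αi (wpow u hu) = M.ipow (αp u))
    (hacF : ∀ u v : List A, u ≠ [] → v ≠ [] → αp u = αp v → alphFin u = alphFin v)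
    (hacI : ∀ w w' : ℕ → A, αi w = αi w' → alphInf w = alphInf w')
    (e : ℕ) (he : ∀ s : Sp, M.mul (mpow M.mul s e) (mpow M.mul s e) = mpow M.mul s e) :
    ∀ B : Set A, Transitive (Edge M αp e B) :=
  edge_transitive_general A Sp Si M αp hp hacF e

end QAH
end
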